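/- arXiv:2506.04927 — 2 statements merged into one kernel-verified Lean document; each statement's English description precedes it below -/
import Mathlib

section
/- Let θ : ℝ → ℝ be continuous, e : [0,T] → ℝ integrable with ē = 0, ε* > 0, ε ∈ (0, ε*] and λ ∈ (0,1]. Let R₁ be the unique positive root of x^{p_-} − ‖e‖_{L¹} T^{(p_- − 1)/p_-} x − T = 0, set R₂ = T^{(p_- − 1)/p_-} R₁ and R₃ = max{ ‖e‖_{L¹} + R₂ · max_{|v| ≤ R₂} |θ(v)| + ε* R₂ T , 1 }. Then every solution u of the periodic problem (φ_{p(t)}(u'(t)))' + λθ(u(t))u'(t) − λε u(t) = λ e(t) on [0,T], u(0) − u(T) = 0 = u'(0) − u'(T), satisfies |u'(t)| ≤ R₃^{1/(p_- − 1)} for all t ∈ [0,T]. -/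
open Set MeasureTheory

/-- `φ_q(x) = |x|^{q-2} x` (with `φ_q(0) = 0`, automatic since `0 ^ y * 0 = 0`). -/
noncomputable def phi (q x : ℝ) : ℝ := |x| ^ (q - 2) * x

/-- sup-norm of `v` on `[0,T]`. -/
noncomputable def supNorm (T : ℝ) (v : ℝ → ℝ) : ℝ := sSup ((fun t => |v t|) '' Set.Icc 0 T)

/-- mean value `v̄ = (1/T) ∫₀ᵀ v`. -/
noncomputable def meanVal (T : ℝ) (v : ℝ → ℝ) : ℝ := (1 / T) * ∫ t in (0:ℝ)..T, v t

/-- `v` (with derivative `v'`) is C¹ on `[0,T]`. -/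
def IsC1On (T : ℝ) (v v' : ℝ → ℝ) : Prop :=
  (∀ t ∈ Set.Icc 0 T, HasDerivWithinAt v (v' t) (Set.Icc 0 T) t) ∧
    ContinuousOn v' (Set.Icc 0 T)

/-- solution of the periodic problem `(φ_{p(t)}(u'))' = F(t)` a.e. on `[0,T]`:
`u` is C¹, satisfies the periodic boundary conditions, and
`w(t) = φ_{p(t)}(u'(t))` is absolutely continuous with a.e. derivative the integrable `F`. -/
def IsAESol (T : ℝ) (p F u u' : ℝ → ℝ) : Prop :=
  IsC1On T u u' ∧ u 0 = u T ∧ u' 0 = u' T ∧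
    MeasureTheory.IntegrableOn F (Set.Icc 0 T) ∧
    ∀ t ∈ Set.Icc 0 T,
      phi (p t) (u' t) = phi (p 0) (u' 0) + ∫ s in (0:ℝ)..t, F s

/-!
Integrating the equation over a period gives `∫ F = 0`; as `∫ θ(u) u' = 0` (the integrand is
`(Θ ∘ u)'` for a primitive `Θ` of `θ`) and `ē = 0`, this forces `ū = 0`, so `u` vanishes somewhere
and `‖u‖_∞ ≤ ‖u'‖_{L¹}`. Multiplying the equation by `u` and integrating by parts (the term
`θ(u) u u'` again integrates to zero, the term `-ε u²` has a sign) gives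
`∫ |u'|^{p(t)} ≤ ‖e‖_{L¹} ‖u'‖_{L¹}`. Since `|u'|^{p_-} ≤ |u'|^{p(t)} + 1`, Hölder's inequality
turns this into `X^{p_-} ≤ ‖e‖_{L¹} T^{(p_- - 1)/p_-} X + T` for `X = ‖u'‖_{L^{p_-}}`, so `X ≤ R₁`
and `‖u'‖_{L¹} ≤ R₂`. Then `‖u‖_∞ ≤ R₂` bounds `∫ |F|` by `R₃`, and as `u'` vanishes somewhere
(Rolle), `|u'(t)|^{p(t) - 1} = |φ_{p(t)}(u'(t))| ≤ ∫ |F| ≤ R₃`.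
-/

@[simp]
lemma phi_zero (q : ℝ) : phi q 0 = 0 := by simp [phi]

lemma abs_phi {q : ℝ} (hq : q ≠ 1) (x : ℝ) : |phi q x| = |x| ^ (q - 1) := by
  rcases eq_or_ne x 0 with rfl | hx
  · simp [Real.zero_rpow (sub_ne_zero.mpr hq)]
  · rw [phi, abs_mul, abs_of_nonneg (by positivity), Real.rpow_sub_one (abs_ne_zero.mpr hx),
      Real.rpow_sub (abs_pos.mpr hx), Real.rpow_two, sq]
    field_simp

lemma phi_mul_self {q : ℝ} (hq : q ≠ 0) (x : ℝ) : phi q x * x = |x| ^ q := by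
  rcases eq_or_ne x 0 with rfl | hx
  · simp [Real.zero_rpow hq]
  · rw [phi, mul_assoc, ← abs_mul_abs_self, Real.rpow_sub (abs_pos.mpr hx), Real.rpow_two, sq]
    field_simp

lemma le_of_rpow_le_mul_add {m A T R x : ℝ} (hm : 1 < m) (hT : 0 < T) (hR : 0 < R)
    (hroot : R ^ m = A * R + T) (hx : 0 ≤ x) (hxle : x ^ m ≤ A * x + T) : x ≤ R := by
  by_contra! hRx
  have hx0 : 0 < x := hR.trans hRx
  set c := R / x
  have hc0 : 0 < c := div_pos hR hx0
  have hc1 : c < 1 := (div_lt_one hx0).mpr hRx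
  have hcx : c * x = R := div_mul_cancel₀ R hx0.ne'
  have hcm : c ^ m ≤ c := by
    simpa using Real.rpow_le_rpow_of_exponent_ge hc0 hc1.le hm.le
  have : R ^ m ≤ A * R + c * T := calc
    R ^ m = c ^ m * x ^ m := by rw [← hcx, Real.mul_rpow hc0.le hx]
    _ ≤ c * (A * x + T) := by gcongr
    _ = A * R + c * T := by rw [← hcx]; ring
  nlinarith [mul_pos hT (sub_pos.mpr hc1)]

lemma rpow_le_rpow_add_one {x a b : ℝ} (hx : 0 ≤ x) (ha : 0 ≤ a) (hab : a ≤ b) :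
    x ^ a ≤ x ^ b + 1 := by
  rcases le_total x 1 with hx1 | hx1
  · linarith [Real.rpow_le_one hx hx1 ha, Real.rpow_nonneg hx b]
  · linarith [Real.rpow_le_rpow_of_exponent_le hx1 hab]

lemma le_rpow_inv_sub_one_of_rpow_sub_one_le {x q m R : ℝ} (hx : 0 ≤ x) (hm : 1 < m)
    (hmq : m ≤ q) (hR : 1 ≤ R) (hxR : x ^ (q - 1) ≤ R) : x ≤ R ^ (1 / (m - 1)) := by
  rcases le_total x 1 with hx1 | hx1
  · exact hx1.trans (Real.one_le_rpow hR (one_div_nonneg.mpr (by linarith)))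
  · calc x = (x ^ (m - 1)) ^ (1 / (m - 1)) := by
          rw [← Real.rpow_mul hx, mul_one_div_cancel (by linarith), Real.rpow_one]
      _ ≤ R ^ (1 / (m - 1)) := by
          gcongr
          exact (Real.rpow_le_rpow_of_exponent_le hx1 (by linarith)).trans hxR

lemma lt_sInf_image_of_forall_lt {p : ℝ → ℝ} {a b c : ℝ} (hab : a ≤ b)
    (hp : ContinuousOn p (Icc a b)) (hc : ∀ t ∈ Icc a b, c < p t) : c < sInf (p '' Icc a b) := by
  obtain ⟨s, hs, hps⟩ :=
    (isCompact_Icc.image_of_continuousOn hp).sInf_mem ((nonempty_Icc.2 hab).image p)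
  exact hps ▸ hc s hs

lemma abs_le_sSup_image_abs {θ : ℝ → ℝ} (hθ : Continuous θ) {r v : ℝ} (hv : |v| ≤ r) :
    |θ v| ≤ sSup ((fun v => |θ v|) '' Icc (-r) r) :=
  le_csSup (isCompact_Icc.bddAbove_image hθ.abs.continuousOn)
    ⟨v, abs_le.mp hv, rfl⟩

lemma exists_eq_zero_of_intervalIntegral_eq_zero {f : ℝ → ℝ} {a b : ℝ} (hab : a ≠ b)
    (hf : ContinuousOn f (uIcc a b)) (h : ∫ x in a..b, f x = 0) : ∃ c ∈ uIcc a b, f c = 0 := by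
  obtain ⟨c, hc, hfc⟩ := exists_eq_interval_average hab hf
  exact ⟨c, uIoo_subset_uIcc_self hc, by rw [hfc, interval_average_eq_div, h, zero_div]⟩

lemma integral_primitive_mul_eq_sub {f g : ℝ → ℝ} {a b : ℝ}
    (hf : IntervalIntegrable f volume a b) (hg : IntervalIntegrable g volume a b) :
    ∫ x in a..b, (∫ t in a..x, f t) * g x
      = (∫ x in a..b, f x) * (∫ x in a..b, g x) - ∫ x in a..b, f x * ∫ t in a..x, g t := by
  have hF := hf.absolutelyContinuousOnInterval_intervalIntegral left_mem_uIcc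
  have hG := hg.absolutelyContinuousOnInterval_intervalIntegral left_mem_uIcc
  have hparts := hF.integral_mul_deriv_eq_deriv_mul hG
  simp only [intervalIntegral.integral_same, zero_mul, sub_zero] at hparts
  convert hparts using 1
  · refine intervalIntegral.integral_congr_ae ?_
    filter_upwards [hg.ae_hasDerivAt_integral] with x hx hxab
    rw [(hx (uIoc_subset_uIcc hxab) a left_mem_uIcc).deriv]
  · congr 1
    refine intervalIntegral.integral_congr_ae ?_
    filter_upwards [hf.ae_hasDerivAt_integral] with x hx hxab
    rw [(hx (uIoc_subset_uIcc hxab) a left_mem_uIcc).deriv]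

lemma integral_abs_le_rpow_mul {f : ℝ → ℝ} {a b q : ℝ} (hab : a ≤ b) (hq : 1 < q)
    (hf : ContinuousOn f (Icc a b)) :
    ∫ x in a..b, |f x| ≤ (∫ x in a..b, |f x| ^ q) ^ (1 / q) * (b - a) ^ ((q - 1) / q) := by
  have hpq : q.HolderConjugate (q / (q - 1)) := Real.HolderConjugate.conjExponent hq
  have hf_mem : MemLp (fun x => |f x|) (ENNReal.ofReal q) (volume.restrict (Ioc a b)) := by
    obtain ⟨C, hC⟩ := isCompact_Icc.exists_bound_of_continuousOn hf.abs
    refine MemLp.of_bound ((hf.abs.mono Ioc_subset_Icc_self).aestronglyMeasurable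
      measurableSet_Ioc) C ?_
    filter_upwards [ae_restrict_mem measurableSet_Ioc] with x hx
    exact hC x (Ioc_subset_Icc_self hx)
  have hholder := integral_mul_le_Lp_mul_Lq_of_nonneg hpq
    (ae_of_all _ fun x => abs_nonneg (f x)) (ae_of_all _ fun _ => zero_le_one) hf_mem
    (memLp_const (1 : ℝ))
  simpa [intervalIntegral.integral_of_le hab, measureReal_def, hab, inv_div] using hholder

/-- By Hölder, `X = ‖v‖_{L^m}` satisfies `X ^ m ≤ A T^{(m-1)/m} X + T`, hence `X ≤ R`. -/
lemma integral_abs_le_of_integral_rpow_le {v q : ℝ → ℝ} {T m A R : ℝ} (hT : 0 < T) (hm : 1 < m)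
    (hmq : ∀ t ∈ Icc 0 T, m ≤ q t) (hv : ContinuousOn v (Icc 0 T))
    (hq : ContinuousOn q (Icc 0 T)) (hA : 0 ≤ A) (hR : 0 < R)
    (hroot : R ^ m - A * T ^ ((m - 1) / m) * R - T = 0)
    (hE : ∫ t in 0..T, |v t| ^ q t ≤ (∫ t in 0..T, |v t|) * A) :
    ∫ t in 0..T, |v t| ≤ T ^ ((m - 1) / m) * R := by
  set I := ∫ t in 0..T, |v t|
  set Y := ∫ t in 0..T, |v t| ^ m
  set X := Y ^ (1 / m)
  set Tα := T ^ ((m - 1) / m)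
  have hY : 0 ≤ Y := intervalIntegral.integral_nonneg hT.le fun t _ => by positivity
  have hXY : X ^ m = Y := by
    rw [← Real.rpow_mul hY, one_div_mul_cancel (by linarith), Real.rpow_one]
  have hholder : I ≤ X * Tα := by
    simpa only [sub_zero] using integral_abs_le_rpow_mul hT.le hm hv
  have hvq : IntervalIntegrable (fun t => |v t| ^ q t) volume 0 T := by
    refine (hv.abs.rpow hq fun t ht => Or.inr ?_).intervalIntegrable_of_Icc hT.le
    linarith [hmq t ht]
  have hYle : Y ≤ I * A + T := calc
    Y ≤ ∫ t in 0..T, (|v t| ^ q t + 1) := by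
      refine intervalIntegral.integral_mono_on hT.le ?_ (hvq.add intervalIntegrable_const)
        fun t ht => rpow_le_rpow_add_one (abs_nonneg _) (by linarith) (hmq t ht)
      exact (hv.abs.rpow_const fun _ _ => Or.inr (by linarith)).intervalIntegrable_of_Icc hT.le
    _ ≤ I * A + T := by
      rw [intervalIntegral.integral_add hvq intervalIntegrable_const]
      simpa using hE
  have hXR : X ≤ R := by
    refine le_of_rpow_le_mul_add (A := A * Tα) hm hT hR (by linarith) (by positivity) ?_
    rw [hXY]
    nlinarith [mul_le_mul_of_nonneg_right hholder hA]
  calc I ≤ X * Tα := hholder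
    _ ≤ Tα * R := by rw [mul_comm]; gcongr

lemma abs_integral_le_integral_abs_of_mem_Icc {f : ℝ → ℝ} {a b c d : ℝ}
    (hf : IntervalIntegrable f volume a b) (hc : c ∈ Icc a b) (hd : d ∈ Icc a b) :
    |∫ x in c..d, f x| ≤ ∫ x in a..b, |f x| := by
  have hab : a ≤ b := hc.1.trans hc.2
  calc |∫ x in c..d, f x| ≤ ∫ x in uIoc c d, |f x| := by
        simpa only [Real.norm_eq_abs] using
          intervalIntegral.norm_integral_le_integral_norm_uIoc (f := f) (μ := volume)
    _ ≤ ∫ x in Ioc a b, |f x| := by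
        refine setIntegral_mono_set hf.1.abs
          (ae_of_all _ fun x => abs_nonneg _) ?_
        exact (Ioc_subset_Ioc (le_min hc.1 hd.1) (max_le hc.2 hd.2)).eventuallyLE
    _ = ∫ x in a..b, |f x| := (intervalIntegral.integral_of_le hab).symm

namespace IsC1On

variable {T : ℝ} {v v' : ℝ → ℝ}

lemma continuousOn (h : IsC1On T v v') : ContinuousOn v (Icc 0 T) :=
  fun x hx => (h.1 x hx).continuousWithinAt

lemma hasDerivAt (h : IsC1On T v v') {x : ℝ} (hx : x ∈ Ioo 0 T) : HasDerivAt v (v' x) x :=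
  (h.1 x (Ioo_subset_Icc_self hx)).hasDerivAt (Icc_mem_nhds hx.1 hx.2)

lemma integral_eq_sub (h : IsC1On T v v') {a b : ℝ} (ha : a ∈ Icc 0 T) (hb : b ∈ Icc 0 T) :
    ∫ x in a..b, v' x = v b - v a := by
  have hsub : uIcc a b ⊆ Icc 0 T := uIcc_subset_Icc ha hb
  refine intervalIntegral.integral_eq_sub_of_hasDeriv_right (h.continuousOn.mono hsub)
    (fun x hx => (h.hasDerivAt ?_).hasDerivWithinAt) (h.2.mono hsub).intervalIntegrable
  exact ⟨(le_min ha.1 hb.1).trans_lt hx.1, hx.2.trans_le (max_le ha.2 hb.2)⟩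

lemma abs_le_integral_abs_deriv (h : IsC1On T v v') {c : ℝ} (hc : c ∈ Icc 0 T) (hvc : v c = 0)
    {t : ℝ} (ht : t ∈ Icc 0 T) : |v t| ≤ ∫ x in 0..T, |v' x| := by
  have hvt : v t = ∫ x in c..t, v' x := by rw [h.integral_eq_sub hc ht, hvc, sub_zero]
  rw [hvt]
  exact abs_integral_le_integral_abs_of_mem_Icc
    (h.2.intervalIntegrable_of_Icc (hc.1.trans hc.2)) hc ht

lemma integral_comp_mul_deriv_eq_zero (h : IsC1On T v v') (hT : 0 ≤ T) (hv : v 0 = v T)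
    {g : ℝ → ℝ} (hg : Continuous g) : ∫ x in 0..T, g (v x) * v' x = 0 := by
  have hIcc : uIcc 0 T = Icc 0 T := uIcc_of_le hT
  have := intervalIntegral.integral_comp_mul_deriv'' (g := g) (hIcc ▸ h.continuousOn)
    (fun x hx => (h.hasDerivAt (by simpa [hT] using hx)).hasDerivWithinAt)
    (hIcc ▸ h.2) hg.continuousOn
  simpa [hv] using this

end IsC1On

namespace IsAESol

variable {T : ℝ} {p F u u' : ℝ → ℝ}

lemma intervalIntegrable (h : IsAESol T p F u u') (hT : 0 ≤ T) :
    IntervalIntegrable F volume 0 T :=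
  (intervalIntegrable_iff_integrableOn_Icc_of_le hT).mpr h.2.2.2.1

lemma integral_eq_zero (h : IsAESol T p F u u') (hT : 0 ≤ T) (hpT : p 0 = p T) :
    ∫ t in 0..T, F t = 0 := by
  have hwT := h.2.2.2.2 T ⟨hT, le_rfl⟩
  rw [← hpT, ← h.2.2.1] at hwT
  linarith

lemma phi_eq_integral_of_deriv_eq_zero (h : IsAESol T p F u u') {τ t : ℝ} (hτ : τ ∈ Icc 0 T)
    (hτ0 : u' τ = 0) (ht : t ∈ Icc 0 T) : phi (p t) (u' t) = ∫ s in τ..t, F s := by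
  have hF : IntervalIntegrable F volume 0 T := h.intervalIntegrable (hτ.1.trans hτ.2)
  have hwτ := h.2.2.2.2 τ hτ
  rw [hτ0, phi_zero] at hwτ
  rw [h.2.2.2.2 t ht, ← intervalIntegral.integral_interval_sub_left
    (hF.mono_set (uIcc_subset_uIcc_left (Icc_subset_uIcc ht)))
    (hF.mono_set (uIcc_subset_uIcc_left (Icc_subset_uIcc hτ)))]
  linarith

lemma abs_deriv_rpow_le (h : IsAESol T p F u u') (hT : 0 < T) (hp : ∀ t ∈ Icc 0 T, p t ≠ 1)
    {t : ℝ} (ht : t ∈ Icc 0 T) : |u' t| ^ (p t - 1) ≤ ∫ s in 0..T, |F s| := by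
  obtain ⟨τ, hτ, hτ0⟩ := exists_hasDerivAt_eq_zero hT h.1.continuousOn h.2.1
    fun x hx => h.1.hasDerivAt hx
  rw [← abs_phi (hp t ht), h.phi_eq_integral_of_deriv_eq_zero (Ioo_subset_Icc_self hτ) hτ0 ht]
  exact abs_integral_le_integral_abs_of_mem_Icc (h.intervalIntegrable hT.le)
    (Ioo_subset_Icc_self hτ) ht

lemma integral_abs_deriv_rpow_eq (h : IsAESol T p F u u') (hT : 0 ≤ T) (hpT : p 0 = p T)
    (hp : ∀ t ∈ Icc 0 T, p t ≠ 0) :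
    ∫ t in 0..T, |u' t| ^ p t = -∫ t in 0..T, F t * u t := by
  have hIcc : uIcc 0 T = Icc 0 T := uIcc_of_le hT
  have hF := h.intervalIntegrable hT
  have hu' : IntervalIntegrable u' volume 0 T := h.1.2.intervalIntegrable_of_Icc hT
  have hFu : IntervalIntegrable (fun t => F t * u t) volume 0 T :=
    hF.mul_continuousOn (hIcc ▸ h.1.continuousOn)
  have hF0 := h.integral_eq_zero hT hpT
  have hu'0 : ∫ t in 0..T, u' t = 0 := by
    rw [h.1.integral_eq_sub ⟨le_rfl, hT⟩ ⟨hT, le_rfl⟩, h.2.1, sub_self]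
  calc ∫ t in 0..T, |u' t| ^ p t
      = ∫ t in 0..T, phi (p 0) (u' 0) * u' t + (∫ s in 0..t, F s) * u' t := by
        refine intervalIntegral.integral_congr fun t ht => ?_
        rw [hIcc] at ht
        rw [← add_mul, ← h.2.2.2.2 t ht, phi_mul_self (hp t ht)]
    _ = -∫ t in 0..T, F t * (u t - u 0) := by
        rw [intervalIntegral.integral_add (hu'.const_mul _) ?_,
          intervalIntegral.integral_const_mul, integral_primitive_mul_eq_sub hF hu', hF0, hu'0]
        · simp only [mul_zero, zero_add, zero_sub]
          congr 1
          refine intervalIntegral.integral_congr fun t ht => ?_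
          rw [hIcc] at ht
          simp only [h.1.integral_eq_sub ⟨le_rfl, hT⟩ ht]
        · have hprim := hF.absolutelyContinuousOnInterval_intervalIntegral left_mem_uIcc
          exact (hprim.continuousOn.mul (hIcc ▸ h.1.2)).intervalIntegrable
    _ = -∫ t in 0..T, F t * u t := by
        simp_rw [mul_sub]
        rw [intervalIntegral.integral_sub hFu (hF.mul_const _), intervalIntegral.integral_mul_const,
          hF0, zero_mul, sub_zero]

end IsAESol

section

variable {T ε lam : ℝ} {p θ e u u' : ℝ → ℝ}

lemma integral_eq_zero_of_isAESol
    (hu : IsAESol T p (fun t => lam * (e t - θ (u t) * u' t + ε * u t)) u u') (hT : 0 ≤ T)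
    (hpT : p 0 = p T) (hθ : Continuous θ) (he : IntervalIntegrable e volume 0 T)
    (he0 : ∫ t in 0..T, e t = 0) (hlam : lam ≠ 0) (hε : ε ≠ 0) : ∫ t in 0..T, u t = 0 := by
  have hF0 := hu.integral_eq_zero hT hpT
  have hθu : IntervalIntegrable (fun t => θ (u t) * u' t) volume 0 T :=
    ((hθ.comp_continuousOn hu.1.continuousOn).mul hu.1.2).intervalIntegrable_of_Icc hT
  have huI : IntervalIntegrable u volume 0 T := hu.1.continuousOn.intervalIntegrable_of_Icc hT
  rw [intervalIntegral.integral_const_mul, intervalIntegral.integral_add (he.sub hθu)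
    (huI.const_mul ε), intervalIntegral.integral_sub he hθu, intervalIntegral.integral_const_mul,
    he0, hu.1.integral_comp_mul_deriv_eq_zero hT hu.2.1 hθ] at hF0
  simpa [hlam, hε] using hF0

lemma abs_le_integral_abs_deriv_of_isAESol
    (hu : IsAESol T p (fun t => lam * (e t - θ (u t) * u' t + ε * u t)) u u') (hT : 0 < T)
    (hpT : p 0 = p T) (hθ : Continuous θ) (he : IntervalIntegrable e volume 0 T)
    (he0 : ∫ t in 0..T, e t = 0) (hlam : lam ≠ 0) (hε : ε ≠ 0) :
    ∀ s ∈ Icc 0 T, |u s| ≤ ∫ t in 0..T, |u' t| := by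
  have hIcc : uIcc 0 T = Icc 0 T := uIcc_of_le hT.le
  obtain ⟨c, hc, huc⟩ := exists_eq_zero_of_intervalIntegral_eq_zero hT.ne
    (hIcc ▸ hu.1.continuousOn) (integral_eq_zero_of_isAESol hu hT.le hpT hθ he he0 hlam hε)
  exact fun s hs => hu.1.abs_le_integral_abs_deriv (hIcc ▸ hc) huc hs

lemma integral_abs_deriv_rpow_le
    (hu : IsAESol T p (fun t => lam * (e t - θ (u t) * u' t + ε * u t)) u u') (hT : 0 ≤ T)
    (hpT : p 0 = p T) (hp : ∀ t ∈ Icc 0 T, p t ≠ 0) (hθ : Continuous θ)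
    (he : IntervalIntegrable e volume 0 T) (hlam0 : 0 ≤ lam) (hlam1 : lam ≤ 1) (hε : 0 ≤ ε)
    {B : ℝ} (hB : ∀ t ∈ Icc 0 T, |u t| ≤ B) :
    ∫ t in 0..T, |u' t| ^ p t ≤ B * ∫ t in 0..T, |e t| := by
  have hIcc : uIcc 0 T = Icc 0 T := uIcc_of_le hT
  have huc := hu.1.continuousOn
  have heu : IntervalIntegrable (fun t => e t * u t) volume 0 T :=
    he.mul_continuousOn (hIcc ▸ huc)
  have hθu : IntervalIntegrable (fun t => θ (u t) * u t * u' t) volume 0 T :=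
    (((hθ.comp_continuousOn huc).mul huc).mul hu.1.2).intervalIntegrable_of_Icc hT
  have huu : IntervalIntegrable (fun t => u t * u t) volume 0 T :=
    (huc.mul huc).intervalIntegrable_of_Icc hT
  have hFu : ∫ t in 0..T, lam * (e t - θ (u t) * u' t + ε * u t) * u t
      = lam * (∫ t in 0..T, e t * u t) + lam * ε * ∫ t in 0..T, u t * u t := by
    have hmid := hu.1.integral_comp_mul_deriv_eq_zero hT hu.2.1 (hθ.mul continuous_id)
    simp only [Pi.mul_apply, id] at hmid
    calc ∫ t in 0..T, lam * (e t - θ (u t) * u' t + ε * u t) * u t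
        = ∫ t in 0..T, (lam * (e t * u t) + lam * ε * (u t * u t)
            - lam * (θ (u t) * u t * u' t)) :=
          intervalIntegral.integral_congr fun t _ => by ring
      _ = lam * (∫ t in 0..T, e t * u t) + lam * ε * ∫ t in 0..T, u t * u t := by
        rw [intervalIntegral.integral_sub ((heu.const_mul _).add (huu.const_mul _))
          (hθu.const_mul _), intervalIntegral.integral_add (heu.const_mul _) (huu.const_mul _)]
        simp only [intervalIntegral.integral_const_mul, hmid, mul_zero, sub_zero]
  have heuB : |∫ t in 0..T, e t * u t| ≤ B * ∫ t in 0..T, |e t| := by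
    rw [← intervalIntegral.integral_const_mul]
    refine (intervalIntegral.abs_integral_le_integral_abs hT).trans
      (intervalIntegral.integral_mono_on hT heu.abs (he.abs.const_mul B) fun t ht => ?_)
    rw [abs_mul, mul_comm]
    exact mul_le_mul_of_nonneg_right (hB t ht) (abs_nonneg _)
  have huu0 : 0 ≤ ∫ t in 0..T, u t * u t :=
    intervalIntegral.integral_nonneg hT fun t _ => mul_self_nonneg _
  rw [hu.integral_abs_deriv_rpow_eq hT hpT hp, hFu]
  nlinarith [mul_le_mul_of_nonneg_left (neg_le_abs (∫ t in 0..T, e t * u t)) hlam0,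
    mul_nonneg (sub_nonneg.mpr hlam1) (abs_nonneg (∫ t in 0..T, e t * u t)),
    mul_nonneg (mul_nonneg hlam0 hε) huu0]

lemma integral_abs_forcing_le
    (hu : IsAESol T p (fun t => lam * (e t - θ (u t) * u' t + ε * u t)) u u') (hT : 0 ≤ T)
    (he : IntervalIntegrable e volume 0 T) (hlam0 : 0 ≤ lam) (hlam1 : lam ≤ 1) (hε : 0 ≤ ε)
    {B M : ℝ} (hB : ∀ t ∈ Icc 0 T, |u t| ≤ B) (hM : ∀ t ∈ Icc 0 T, |θ (u t)| ≤ M) :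
    ∫ t in 0..T, |lam * (e t - θ (u t) * u' t + ε * u t)|
      ≤ (∫ t in 0..T, |e t|) + M * (∫ t in 0..T, |u' t|) + ε * B * T := by
  have hu' : IntervalIntegrable (fun t => |u' t|) volume 0 T :=
    hu.1.2.abs.intervalIntegrable_of_Icc hT
  calc ∫ t in 0..T, |lam * (e t - θ (u t) * u' t + ε * u t)|
      ≤ ∫ t in 0..T, (|e t| + M * |u' t| + ε * B) := by
        refine intervalIntegral.integral_mono_on hT (hu.intervalIntegrable hT).abs
          ((he.abs.add (hu'.const_mul M)).add intervalIntegrable_const) fun t ht => ?_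
        have hθt : |θ (u t) * u' t| ≤ M * |u' t| := by
          rw [abs_mul]; exact mul_le_mul_of_nonneg_right (hM t ht) (abs_nonneg _)
        have hεt : |ε * u t| ≤ ε * B := by
          rw [abs_mul, abs_of_nonneg hε]; exact mul_le_mul_of_nonneg_left (hB t ht) hε
        rw [abs_mul, abs_of_nonneg hlam0]
        have := abs_add_three (e t) (-(θ (u t) * u' t)) (ε * u t)
        rw [abs_neg, ← sub_eq_add_neg] at this
        nlinarith [abs_nonneg (e t - θ (u t) * u' t + ε * u t)]
    _ = (∫ t in 0..T, |e t|) + M * (∫ t in 0..T, |u' t|) + ε * B * T := by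
        rw [intervalIntegral.integral_add (he.abs.add (hu'.const_mul M)) intervalIntegrable_const,
          intervalIntegral.integral_add he.abs (hu'.const_mul M)]
        simp only [intervalIntegral.integral_const_mul, intervalIntegral.integral_const, sub_zero,
          smul_eq_mul]
        ring

end

theorem stmt2_general (T : ℝ) (hT : 0 < T) (p : ℝ → ℝ)
    (hp : ContinuousOn p (Set.Icc 0 T)) (hp1 : ∀ t ∈ Set.Icc 0 T, 1 < p t)
    (hpT : p 0 = p T)
    (pm : ℝ) (hpm : pm = sInf (p '' Set.Icc 0 T))
    (θ : ℝ → ℝ) (hθ : Continuous θ)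
    (e : ℝ → ℝ) (he : MeasureTheory.IntegrableOn e (Set.Icc 0 T))
    (hemean : meanVal T e = 0)
    (εs ε lam : ℝ) (hε : 0 < ε) (hεεs : ε ≤ εs)
    (hlam0 : 0 < lam) (hlam1 : lam ≤ 1)
    (R₁ : ℝ) (hR₁pos : 0 < R₁)
    (hR₁root : R₁ ^ pm - (∫ t in (0:ℝ)..T, |e t|) * T ^ ((pm - 1) / pm) * R₁ - T = 0)
    (R₂ R₃ : ℝ) (hR₂ : R₂ = T ^ ((pm - 1) / pm) * R₁)
    (hR₃ : R₃ = max ((∫ t in (0:ℝ)..T, |e t|) +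
        R₂ * sSup ((fun v => |θ v|) '' Set.Icc (-R₂) R₂) + εs * R₂ * T) 1)
    (u u' : ℝ → ℝ)
    (hu : IsAESol T p (fun t => lam * (e t - θ (u t) * u' t + ε * u t)) u u') :
    ∀ t ∈ Set.Icc 0 T, |u' t| ≤ R₃ ^ (1 / (pm - 1)) := by
  have hpm1 : 1 < pm := hpm ▸ lt_sInf_image_of_forall_lt hT.le hp hp1
  have hpm_le : ∀ s ∈ Icc 0 T, pm ≤ p s := fun s hs =>
    hpm ▸ csInf_le (isCompact_Icc.bddBelow_image hp) (mem_image_of_mem p hs)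
  have heI : IntervalIntegrable e volume 0 T :=
    (intervalIntegrable_iff_integrableOn_Icc_of_le hT.le).mpr he
  have he0 : ∫ t in 0..T, e t = 0 := by simpa [meanVal, hT.ne'] using hemean
  have hsup : ∀ s ∈ Icc 0 T, |u s| ≤ ∫ t in 0..T, |u' t| :=
    abs_le_integral_abs_deriv_of_isAESol hu hT hpT hθ heI he0 hlam0.ne' hε.ne'
  have hR₂u : ∫ t in 0..T, |u' t| ≤ R₂ := hR₂ ▸ integral_abs_le_of_integral_rpow_le hT hpm1
    hpm_le hu.1.2 hp (intervalIntegral.integral_nonneg hT.le fun _ _ => abs_nonneg _) hR₁pos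
    hR₁root (integral_abs_deriv_rpow_le hu hT.le hpT (fun s hs => (one_pos.trans (hp1 s hs)).ne')
      hθ heI hlam0.le hlam1 hε.le hsup)
  have hbound : ∀ s ∈ Icc 0 T, |u s| ≤ R₂ := fun s hs => (hsup s hs).trans hR₂u
  have hR₂0 : 0 ≤ R₂ := (abs_nonneg _).trans (hbound 0 ⟨le_rfl, hT.le⟩)
  set M := sSup ((fun v => |θ v|) '' Icc (-R₂) R₂)
  have hM0 : 0 ≤ M := (abs_nonneg _).trans (abs_le_sSup_image_abs (v := 0) hθ (by simpa using hR₂0))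
  have hFR₃ : ∫ t in 0..T, |lam * (e t - θ (u t) * u' t + ε * u t)| ≤ R₃ := calc
    _ ≤ (∫ t in 0..T, |e t|) + M * (∫ t in 0..T, |u' t|) + ε * R₂ * T :=
      integral_abs_forcing_le hu hT.le heI hlam0.le hlam1 hε.le hbound
        fun s hs => abs_le_sSup_image_abs hθ (hbound s hs)
    _ ≤ (∫ t in 0..T, |e t|) + R₂ * M + εs * R₂ * T := by rw [mul_comm R₂]; gcongr
    _ ≤ R₃ := hR₃ ▸ le_max_left _ _
  intro t ht
  exact le_rpow_inv_sub_one_of_rpow_sub_one_le (abs_nonneg _) hpm1 (hpm_le t ht)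
    (hR₃ ▸ le_max_right _ _) ((hu.abs_deriv_rpow_le hT (fun s hs => (hp1 s hs).ne') ht).trans hFR₃)

theorem stmt2 (T : ℝ) (hT : 0 < T) (p : ℝ → ℝ)
    (hp : ContinuousOn p (Set.Icc 0 T)) (hp1 : ∀ t ∈ Set.Icc 0 T, 1 < p t)
    (hpT : p 0 = p T)
    (pm : ℝ) (hpm : pm = sInf (p '' Set.Icc 0 T))
    (θ : ℝ → ℝ) (hθ : Continuous θ)
    (e : ℝ → ℝ) (he : MeasureTheory.IntegrableOn e (Set.Icc 0 T))
    (hemean : meanVal T e = 0)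
    (εs ε lam : ℝ) (hεs : 0 < εs) (hε : 0 < ε) (hεεs : ε ≤ εs)
    (hlam0 : 0 < lam) (hlam1 : lam ≤ 1)
    (R₁ : ℝ) (hR₁pos : 0 < R₁)
    (hR₁root : R₁ ^ pm - (∫ t in (0:ℝ)..T, |e t|) * T ^ ((pm - 1) / pm) * R₁ - T = 0)
    (R₂ R₃ : ℝ) (hR₂ : R₂ = T ^ ((pm - 1) / pm) * R₁)
    (hR₃ : R₃ = max ((∫ t in (0:ℝ)..T, |e t|) +
        R₂ * sSup ((fun v => |θ v|) '' Set.Icc (-R₂) R₂) + εs * R₂ * T) 1)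
    (u u' : ℝ → ℝ)
    (hu : IsAESol T p (fun t => lam * (e t - θ (u t) * u' t + ε * u t)) u u') :
    ∀ t ∈ Set.Icc 0 T, |u' t| ≤ R₃ ^ (1 / (pm - 1)) :=
  stmt2_general T hT p hp hp1 hpT pm hpm θ hθ e he hemean εs ε lam hε hεεs hlam0 hlam1 R₁ hR₁pos
    hR₁root R₂ R₃ hR₂ hR₃ u u' hu
end

section
/- Let e : [0,T] → ℝ be integrable with ē = 0, θ : ℝ → ℝ continuous and c ∈ ℝ. Then every solution u with ū = 0 of the periodic problem (φ_{p(t)}(u'(t)))' + θ(c + u(t))u'(t) = e(t) on [0,T], u(0) − u(T) = 0 = u'(0) − u'(T), satisfies ∫₀ᵀ |u'(t)|^{p(t)} dt ≤ ‖e‖_{L¹} ‖u‖_∞ and ∫₀ᵀ |u'(t)|^{p_-} dt ≤ T + ‖e‖_{L¹} ‖u‖_∞. -/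
open Set MeasureTheory

lemma Real.rpow_le_one_add_rpow {x r s : ℝ} (hx : 0 ≤ x) (hr : 0 ≤ r) (hrs : r ≤ s) :
    x ^ r ≤ 1 + x ^ s := by
  rcases le_total x 1 with h | h
  · linarith [Real.rpow_le_one hx h hr, Real.rpow_nonneg hx s]
  · linarith [Real.rpow_le_rpow_of_exponent_le h hrs]

lemma abs_le_supNorm {T : ℝ} {v : ℝ → ℝ} (hv : ContinuousOn v (Icc 0 T)) {t : ℝ}
    (ht : t ∈ Icc 0 T) : |v t| ≤ supNorm T v :=
  le_csSup (isCompact_Icc.image_of_continuousOn hv.abs).bddAbove ⟨t, ht, rfl⟩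

lemma abs_integral_mul_le_integral_abs_mul_supNorm {T : ℝ} (hT : 0 ≤ T) {e v : ℝ → ℝ}
    (he : IntegrableOn e (Icc 0 T)) (hv : ContinuousOn v (Icc 0 T)) :
    |∫ t in (0:ℝ)..T, e t * v t| ≤ (∫ t in (0:ℝ)..T, |e t|) * supNorm T v := by
  have he' : IntervalIntegrable e volume 0 T := (uIcc_of_le hT ▸ he).intervalIntegrable
  calc |∫ t in (0:ℝ)..T, e t * v t| ≤ ∫ t in (0:ℝ)..T, |e t * v t| :=
        intervalIntegral.abs_integral_le_integral_abs hT
    _ ≤ ∫ t in (0:ℝ)..T, |e t| * supNorm T v := by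
        refine intervalIntegral.integral_mono_on hT
          (he'.mul_continuousOn (uIcc_of_le hT ▸ hv)).abs (he'.abs.mul_const _) fun t ht => ?_
        rw [abs_mul]
        exact mul_le_mul_of_nonneg_left (abs_le_supNorm hv ht) (abs_nonneg _)
    _ = (∫ t in (0:ℝ)..T, |e t|) * supNorm T v := intervalIntegral.integral_mul_const _ _

lemma integral_abs_rpow_le_add_integral_abs_rpow {T r : ℝ} (hT : 0 ≤ T) {q v : ℝ → ℝ}
    (hv : ContinuousOn v (Icc 0 T)) (hr : 0 ≤ r) (hrq : ∀ t ∈ Icc 0 T, r ≤ q t)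
    (hq : IntervalIntegrable (fun t => |v t| ^ q t) volume 0 T) :
    ∫ t in (0:ℝ)..T, |v t| ^ r ≤ T + ∫ t in (0:ℝ)..T, |v t| ^ q t :=
  calc ∫ t in (0:ℝ)..T, |v t| ^ r ≤ ∫ t in (0:ℝ)..T, (1 + |v t| ^ q t) :=
        intervalIntegral.integral_mono_on hT
          (ContinuousOn.intervalIntegrable (uIcc_of_le hT ▸
            hv.abs.rpow_const fun _ _ => Or.inr hr))
          (intervalIntegrable_const.add hq)
          fun t ht => Real.rpow_le_one_add_rpow (abs_nonneg _) hr (hrq t ht)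
    _ = T + ∫ t in (0:ℝ)..T, |v t| ^ q t := by
        simp [intervalIntegral.integral_add intervalIntegrable_const hq]

section C1OnIcc

variable {a b : ℝ} {g g' : ℝ → ℝ}

lemma AbsolutelyContinuousOnInterval.of_hasDerivWithinAt_Icc (hab : a ≤ b)
    (hg : ∀ t ∈ Icc a b, HasDerivWithinAt g (g' t) (Icc a b) t)
    (hg' : ContinuousOn g' (Icc a b)) : AbsolutelyContinuousOnInterval g a b := by
  obtain ⟨C, hC⟩ := isCompact_Icc.exists_bound_of_continuousOn hg'
  refine LipschitzOnWith.absolutelyContinuousOnInterval (K := C.toNNReal) ?_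
  rw [uIcc_of_le hab]
  refine (convex_Icc a b).lipschitzOnWith_of_nnnorm_hasDerivWithin_le hg fun x hx => ?_
  rw [← NNReal.coe_le_coe, coe_nnnorm, Real.coe_toNNReal']
  exact (hC x hx).trans (le_max_left _ _)

lemma deriv_ae_eq_of_hasDerivWithinAt_Icc (hab : a ≤ b)
    (hg : ∀ t ∈ Icc a b, HasDerivWithinAt g (g' t) (Icc a b) t) :
    ∀ᵐ t, t ∈ uIoc a b → deriv g t = g' t := by
  filter_upwards [Measure.ae_ne volume b] with t htb ht
  rw [uIoc_of_le hab] at ht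
  have ht' : t ∈ Ioo a b := ⟨ht.1, lt_of_le_of_ne ht.2 htb⟩
  exact ((hg t (Ioo_subset_Icc_self ht')).hasDerivAt (Icc_mem_nhds ht'.1 ht'.2)).deriv

lemma integral_mul_deriv_eq_of_eq_add_primitive (hab : a ≤ b) {w F : ℝ → ℝ}
    (hF : IntervalIntegrable F volume a b) (hw : ∀ t ∈ Icc a b, w t = w a + ∫ s in a..t, F s)
    (hg : ∀ t ∈ Icc a b, HasDerivWithinAt g (g' t) (Icc a b) t)
    (hg' : ContinuousOn g' (Icc a b)) :
    ∫ t in a..b, w t * g' t = w b * g b - w a * g a - ∫ t in a..b, F t * g t := by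
  set W : ℝ → ℝ := fun t => w a + ∫ s in a..t, F s
  have hW : AbsolutelyContinuousOnInterval W a b :=
    (LipschitzWith.const (w a)).lipschitzOnWith.absolutelyContinuousOnInterval.add
      (hF.absolutelyContinuousOnInterval_intervalIntegral left_mem_uIcc)
  have hparts := hW.integral_mul_deriv_eq_deriv_mul
    (AbsolutelyContinuousOnInterval.of_hasDerivWithinAt_Icc hab hg hg')
  have hWa : W a = w a := by simp [W]
  rw [show W b = w b from (hw b (right_mem_Icc.2 hab)).symm, hWa] at hparts
  calc ∫ t in a..b, w t * g' t = ∫ t in a..b, W t * deriv g t := by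
        refine intervalIntegral.integral_congr_ae ?_
        filter_upwards [deriv_ae_eq_of_hasDerivWithinAt_Icc hab hg] with t ht htab
        rw [ht htab, hw t (uIcc_of_le hab ▸ uIoc_subset_uIcc htab)]
    _ = w b * g b - w a * g a - ∫ t in a..b, deriv W t * g t := hparts
    _ = w b * g b - w a * g a - ∫ t in a..b, F t * g t := by
        congr 1
        refine intervalIntegral.integral_congr_ae ?_
        filter_upwards [hF.ae_hasDerivAt_integral] with t ht htab
        rw [((ht (uIoc_subset_uIcc htab) a left_mem_uIcc).const_add (w a)).deriv]

lemma integral_comp_mul_deriv_eq_zero (hab : a ≤ b)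
    (hg : ∀ t ∈ Icc a b, HasDerivWithinAt g (g' t) (Icc a b) t)
    (hg' : ContinuousOn g' (Icc a b)) (hper : g a = g b) {h : ℝ → ℝ} (hh : Continuous h) :
    ∫ t in a..b, h (g t) * g' t = 0 := by
  have hsubst := intervalIntegral.integral_comp_mul_deriv'' (uIcc_of_le hab ▸ fun t ht =>
      (hg t ht).continuousWithinAt) (fun t ht => ?_) (uIcc_of_le hab ▸ hg') hh.continuousOn
  · rwa [hper, intervalIntegral.integral_same] at hsubst
  · rw [min_eq_left hab, max_eq_right hab] at ht
    exact ((hg t (Ioo_subset_Icc_self ht)).hasDerivAt (Icc_mem_nhds ht.1 ht.2)).hasDerivWithinAt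

end C1OnIcc

namespace IsAESol

variable {T : ℝ} {p F u u' : ℝ → ℝ}

lemma abs_rpow_eq (hsol : IsAESol T p F u u') (hp : ∀ t ∈ Icc 0 T, p t ≠ 0) {t : ℝ}
    (ht : t ∈ Icc 0 T) :
    |u' t| ^ p t = (phi (p 0) (u' 0) + ∫ s in (0:ℝ)..t, F s) * u' t := by
  rw [← phi_mul_self (hp t ht), hsol.2.2.2.2 t ht]

lemma intervalIntegrable_abs_rpow (hT : 0 ≤ T) (hsol : IsAESol T p F u u')
    (hp : ∀ t ∈ Icc 0 T, p t ≠ 0) :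
    IntervalIntegrable (fun t => |u' t| ^ p t) volume 0 T := by
  refine ContinuousOn.intervalIntegrable (uIcc_of_le hT ▸ ?_)
  refine ContinuousOn.congr ?_ fun t ht => hsol.abs_rpow_eq hp ht
  refine (continuousOn_const.add ?_).mul hsol.1.2
  exact uIcc_of_le hT ▸ intervalIntegral.continuousOn_primitive_interval
    (uIcc_of_le hT ▸ hsol.2.2.2.1)

lemma integral_abs_rpow_eq (hT : 0 ≤ T) (hsol : IsAESol T p F u u')
    (hp : ∀ t ∈ Icc 0 T, p t ≠ 0) (hpT : p 0 = p T) :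
    ∫ t in (0:ℝ)..T, |u' t| ^ p t = -∫ t in (0:ℝ)..T, F t * u t := by
  obtain ⟨⟨hud, hu'c⟩, hu0, hu'0, hF, hw⟩ := hsol
  have hwT : phi (p T) (u' T) = phi (p 0) (u' 0) := by rw [← hpT, ← hu'0]
  calc ∫ t in (0:ℝ)..T, |u' t| ^ p t = ∫ t in (0:ℝ)..T, phi (p t) (u' t) * u' t :=
        intervalIntegral.integral_congr fun t ht =>
          (phi_mul_self (hp t (uIcc_of_le hT ▸ ht)) _).symm
    _ = phi (p T) (u' T) * u T - phi (p 0) (u' 0) * u 0 - ∫ t in (0:ℝ)..T, F t * u t :=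
        integral_mul_deriv_eq_of_eq_add_primitive hT (uIcc_of_le hT ▸ hF).intervalIntegrable
          hw hud hu'c
    _ = -∫ t in (0:ℝ)..T, F t * u t := by rw [hwT, hu0]; ring

lemma integral_abs_rpow_eq_of_damped (hT : 0 ≤ T) {e θ : ℝ → ℝ} {c : ℝ}
    (hsol : IsAESol T p (fun t => e t - θ (c + u t) * u' t) u u')
    (hp : ∀ t ∈ Icc 0 T, p t ≠ 0) (hpT : p 0 = p T) (he : IntegrableOn e (Icc 0 T))
    (hθ : Continuous θ) :
    ∫ t in (0:ℝ)..T, |u' t| ^ p t = -∫ t in (0:ℝ)..T, e t * u t := by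
  obtain ⟨⟨hud, hu'c⟩, hu0, -⟩ := id hsol
  have huc : ContinuousOn u (Icc 0 T) := fun t ht => (hud t ht).continuousWithinAt
  have hdamping : ∫ t in (0:ℝ)..T, θ (c + u t) * u' t * u t = 0 := by
    simpa only [mul_right_comm] using integral_comp_mul_deriv_eq_zero hT hud hu'c hu0
      (h := fun x => θ (c + x) * x) (by fun_prop)
  have heu : IntervalIntegrable (fun t => e t * u t) volume 0 T :=
    (uIcc_of_le hT ▸ he).intervalIntegrable.mul_continuousOn (uIcc_of_le hT ▸ huc)
  have hθu : IntervalIntegrable (fun t => θ (c + u t) * u' t * u t) volume 0 T :=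
    ContinuousOn.intervalIntegrable (uIcc_of_le hT ▸
      ((hθ.comp_continuousOn (continuousOn_const.add huc)).mul hu'c).mul huc)
  rw [hsol.integral_abs_rpow_eq hT hp hpT]
  simp only [sub_mul]
  rw [intervalIntegral.integral_sub heu hθu, hdamping, sub_zero]

end IsAESol

theorem stmt5_general (T : ℝ) (hT : 0 < T) (p : ℝ → ℝ)
    (hp1 : ∀ t ∈ Set.Icc 0 T, 1 < p t)
    (hpT : p 0 = p T)
    (pm : ℝ) (hpm : pm = sInf (p '' Set.Icc 0 T))
    (e : ℝ → ℝ) (he : MeasureTheory.IntegrableOn e (Set.Icc 0 T))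
    (θ : ℝ → ℝ) (hθ : Continuous θ) (c : ℝ)
    (u u' : ℝ → ℝ)
    (hu : IsAESol T p (fun t => e t - θ (c + u t) * u' t) u u') :
    (∫ t in (0:ℝ)..T, |u' t| ^ (p t)) ≤ (∫ t in (0:ℝ)..T, |e t|) * supNorm T u ∧
    (∫ t in (0:ℝ)..T, |u' t| ^ pm) ≤ T + (∫ t in (0:ℝ)..T, |e t|) * supNorm T u := by
  have huc : ContinuousOn u (Icc 0 T) := fun t ht => (hu.1.1 t ht).continuousWithinAt
  have hp0 : ∀ t ∈ Icc 0 T, p t ≠ 0 := fun t ht => (zero_lt_one.trans (hp1 t ht)).ne'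
  have henergy := hu.integral_abs_rpow_eq_of_damped hT.le hp0 hpT he hθ
  have hfirst := henergy ▸
    (neg_le_abs _).trans (abs_integral_mul_le_integral_abs_mul_supNorm hT.le he huc)
  have hpm_le : ∀ t ∈ Icc 0 T, pm ≤ p t := fun t ht =>
    hpm ▸ csInf_le ⟨1, forall_mem_image.2 fun s hs => (hp1 s hs).le⟩ (mem_image_of_mem p ht)
  have hpm_nonneg : 0 ≤ pm :=
    hpm ▸ le_csInf ((nonempty_Icc.2 hT.le).image p) (forall_mem_image.2 fun s hs =>
      zero_le_one.trans (hp1 s hs).le)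
  refine ⟨hfirst, ?_⟩
  calc ∫ t in (0:ℝ)..T, |u' t| ^ pm ≤ T + ∫ t in (0:ℝ)..T, |u' t| ^ p t :=
        integral_abs_rpow_le_add_integral_abs_rpow hT.le hu.1.2 hpm_nonneg hpm_le
          (hu.intervalIntegrable_abs_rpow hT.le hp0)
    _ ≤ T + (∫ t in (0:ℝ)..T, |e t|) * supNorm T u := by gcongr

theorem stmt5 (T : ℝ) (hT : 0 < T) (p : ℝ → ℝ)
    (hp : ContinuousOn p (Set.Icc 0 T)) (hp1 : ∀ t ∈ Set.Icc 0 T, 1 < p t)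
    (hpT : p 0 = p T)
    (pm : ℝ) (hpm : pm = sInf (p '' Set.Icc 0 T))
    (e : ℝ → ℝ) (he : MeasureTheory.IntegrableOn e (Set.Icc 0 T))
    (hemean : meanVal T e = 0)
    (θ : ℝ → ℝ) (hθ : Continuous θ) (c : ℝ)
    (u u' : ℝ → ℝ)
    (hu : IsAESol T p (fun t => e t - θ (c + u t) * u' t) u u')
    (humean : meanVal T u = 0) :
    (∫ t in (0:ℝ)..T, |u' t| ^ (p t)) ≤ (∫ t in (0:ℝ)..T, |e t|) * supNorm T u ∧
    (∫ t in (0:ℝ)..T, |u' t| ^ pm) ≤ T + (∫ t in (0:ℝ)..T, |e t|) * supNorm T u :=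
  stmt5_general T hT p hp1 hpT pm hpm e he θ hθ c u u' hu
end
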